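/- arXiv:1612.03634 — 4 statements merged into one kernel-verified Lean document; each statement's English description precedes it below -/
import Mathlib

section
/- An abelian category C has homological dimension at most n (i.e., Ext^{n+1}_C(X,Y) = 0 for all X, Y) if and only if for every object X of C, the functor Ext^n_C(X, -) is right exact. -/
/-!
By the long exact sequence of `Ext^•(X, -)`, right exactness of `Ext^n(X, -)` on
`0 → A → B → C → 0` amounts to the vanishing of the connecting map
`Ext^n(X, C) → Ext^{n+1}(X, A)`, which is automatic when `Ext^{n+1}` vanishes.

Conversely, every class `e ∈ Ext^{n+1}(X, Y)` is effaced by a monomorphism `i : Y ⟶ B`: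
written as a left fraction `X ⟶ L ⟵ Y[n+1]` in the derived category, `e` dies after
projecting `L` onto its opcycles `B` in degree `-(n+1)`, where `X[0]` vanishes, and the
quasi-isomorphism `Y[n+1] ⟶ L` makes the induced `Y ⟶ B` a monomorphism. Right exactness
on `0 → Y → B → B/Y → 0` then says that `e`, which lifts along the connecting map since it
dies in `Ext^{n+1}(X, B)`, comes from `Ext^n(X, B)` and therefore vanishes.
-/

open CategoryTheory Category Limits

universe w v u

namespace HomologicalComplex

variable {C : Type u} [Category.{v} C] [Abelian C] {ι : Type*} {c : ComplexShape ι}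
  [DecidableEq ι]

noncomputable def pOpcyclesToSingle (L : HomologicalComplex C c) (j : ι) :
    L ⟶ (single C c j).obj (L.opcycles j) :=
  mkHomToSingle (L.pOpcycles j) (fun i _ => L.d_pOpcycles i j)

lemma mono_singleObjOpcyclesSelfIso_hom_comp_opcyclesMap {j : ι} {Y : C}
    {L : HomologicalComplex C c} (s : (single C c j).obj Y ⟶ L) [Mono (homologyMap s j)] :
    Mono ((singleObjOpcyclesSelfIso c j Y).hom ≫ opcyclesMap s j) := by
  rw [← singleObjHomologySelfIso_inv_homologyι_assoc, ← homologyι_naturality]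
  infer_instance

lemma comp_pOpcyclesToSingle {j : ι} {Y : C} {L : HomologicalComplex C c}
    (s : (single C c j).obj Y ⟶ L) :
    s ≫ L.pOpcyclesToSingle j =
      (single C c j).map ((singleObjOpcyclesSelfIso c j Y).hom ≫ opcyclesMap s j) := by
  ext
  simp [pOpcyclesToSingle, single_map_f_self, singleObjOpcyclesSelfIso_hom]

lemma comp_pOpcyclesToSingle_eq_zero {j : ι} {K L : HomologicalComplex C c} (g : K ⟶ L)
    (hK : IsZero (K.X j)) : g ≫ L.pOpcyclesToSingle j = 0 := by
  ext
  exact hK.eq_of_src _ _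

end HomologicalComplex

namespace DerivedCategory

variable {C : Type u} [Category.{v} C] [Abelian C] [HasDerivedCategory.{w} C]

lemma exists_mono_comp_singleFunctor_map_eq_zero {K : CochainComplex C ℤ} {j : ℤ}
    (hK : IsZero (K.X j)) {Y : C} (f : Q.obj K ⟶ (singleFunctor C j).obj Y) :
    ∃ (B : C) (i : Y ⟶ B), Mono i ∧ f ≫ (singleFunctor C j).map i = 0 := by
  obtain ⟨L, g, s, hs, rfl⟩ := left_fac (Y := (HomologicalComplex.single C _ j).obj Y) f
  rw [isIso_Q_map_iff_quasiIso] at hs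
  refine ⟨_, _, HomologicalComplex.mono_singleObjOpcyclesSelfIso_hom_comp_opcyclesMap s, ?_⟩
  have hzero : Q.map g ≫ Q.map (L.pOpcyclesToSingle j) = 0 := by
    rw [← Q.map_comp, HomologicalComplex.comp_pOpcyclesToSingle_eq_zero g hK, Q.map_zero]
  rw [← IsIso.inv_hom_id_assoc (Q.map s) (Q.map (L.pOpcyclesToSingle j)), ← Q.map_comp,
    HomologicalComplex.comp_pOpcyclesToSingle] at hzero
  exact (assoc _ _ _).trans hzero

end DerivedCategory

namespace CategoryTheory.Abelian.Ext

variable {C : Type u} [Category.{v} C] [Abelian C] [HasExt.{w} C]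

lemma exists_mono_comp_mk₀_eq_zero {X Y : C} {k : ℕ} (hk : k ≠ 0) (e : Ext X Y k) :
    ∃ (B : C) (i : Y ⟶ B), Mono i ∧ e.comp (mk₀ i) (add_zero k) = 0 := by
  let := HasDerivedCategory.standard C
  let σ := (DerivedCategory.singleFunctors C).shiftIso (k : ℤ) (-(k : ℤ)) 0 (by omega)
  obtain ⟨B, i, hi, hzero⟩ := DerivedCategory.exists_mono_comp_singleFunctor_map_eq_zero
    (HomologicalComplex.isZero_single_obj_X _ 0 X (-(k : ℤ)) (by omega)) (e.hom ≫ σ.hom.app Y)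
  refine ⟨B, i, hi, Ext.ext ?_⟩
  rw [zero_hom, ← hom_comp_singleFunctor_map_shift, ← cancel_mono (σ.hom.app B),
    Limits.zero_comp, assoc, ← Functor.comp_map, σ.hom.naturality i, ← assoc]
  exact hzero

variable {X : C} {S : ShortComplex C} (hS : S.ShortExact)
include hS

lemma covariant_function_exact₂ (n : ℕ) :
    Function.Exact (fun e : Ext X S.X₁ n => e.comp (mk₀ S.f) (add_zero n))
      (fun e : Ext X S.X₂ n => e.comp (mk₀ S.g) (add_zero n)) :=
  (ShortComplex.ab_exact_iff_function_exact _).1 (covariant_sequence_exact₂' X hS n)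

lemma comp_mk₀_g_surjective_of_subsingleton {n : ℕ} [Subsingleton (Ext X S.X₁ (n + 1))] :
    Function.Surjective (fun e : Ext X S.X₂ n => e.comp (mk₀ S.g) (add_zero n)) :=
  fun x₃ => covariant_sequence_exact₃ X hS x₃ rfl (Subsingleton.elim _ _)

lemma eq_zero_of_comp_mk₀_f_eq_zero {n : ℕ} (x₁ : Ext X S.X₁ (n + 1))
    (hx₁ : x₁.comp (mk₀ S.f) (add_zero _) = 0)
    (hg : Function.Surjective (fun e : Ext X S.X₂ n => e.comp (mk₀ S.g) (add_zero n))) :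
    x₁ = 0 := by
  obtain ⟨x₃, rfl⟩ := covariant_sequence_exact₁ X hS x₁ hx₁ rfl
  obtain ⟨x₂, rfl⟩ := hg x₃
  rw [comp_assoc_of_second_deg_zero, hS.comp_extClass, comp_zero]

end CategoryTheory.Abelian.Ext

open CategoryTheory CategoryTheory.Abelian

/-- An abelian category `C` has homological dimension at most `n`
(i.e. `Ext^{n+1}(X,Y) = 0` for all `X`, `Y`) if and only if for every object `X`,
the covariant functor `Ext^n(X, -)` is right exact, i.e. for every short exact
sequence `0 → A → B → C → 0` the induced sequence
`Ext^n(X,A) → Ext^n(X,B) → Ext^n(X,C) → 0` is exact. -/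
theorem homological_dimension_le_iff_ext_right_exact
    {C : Type u} [Category.{v} C] [Abelian C] [HasExt.{w} C] (n : ℕ) :
    (∀ X Y : C, Subsingleton (Ext X Y (n + 1))) ↔
      (∀ (X : C) (S : ShortComplex C), S.ShortExact →
        (Function.Exact
            (fun e : Ext X S.X₁ n => e.comp (Ext.mk₀ S.f) (add_zero n))
            (fun e : Ext X S.X₂ n => e.comp (Ext.mk₀ S.g) (add_zero n)) ∧
          Function.Surjective
            (fun e : Ext X S.X₂ n => e.comp (Ext.mk₀ S.g) (add_zero n)))) := by
  constructor
  · intro h X S hS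
    exact ⟨Ext.covariant_function_exact₂ hS n, Ext.comp_mk₀_g_surjective_of_subsingleton hS⟩
  intro h X Y
  refine subsingleton_of_forall_eq 0 fun e => ?_
  obtain ⟨B, i, _, hi⟩ := e.exists_mono_comp_mk₀_eq_zero n.succ_ne_zero
  have hS : (ShortComplex.mk i (cokernel.π i) (cokernel.condition i)).ShortExact :=
    ⟨ShortComplex.exact_of_g_is_cokernel _ (cokernelIsCokernel i)⟩
  exact Ext.eq_zero_of_comp_mk₀_f_eq_zero hS e hi (h X _ hS).2
end

section
/- In the category F̃ of triples (X, Y, η) with X in a semi-simple abelian category X̃, Y in a semi-simple abelian category Y, and η ∈ Hom_{X̃}(F(Y), X) for a fixed exact functor F : Y → X̃, an object Z = (X, Y, η) is projective if and only if η is a monomorphism; in that case Z ≅ X' × E(Y) for some subobject X' of X, where E(Y) = (F(Y), Y, id). -/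
open CategoryTheory CategoryTheory.Limits

universe v₁ v₂ u₁ u₂

variable {A : Type u₁} [Category.{v₁} A] [Abelian A]
variable {B : Type u₂} [Category.{v₂} B] [Abelian B]
variable (F : B ⥤ A)

/-- An abelian category is semi-simple when every short exact sequence splits. -/
def IsSemisimpleCat (D : Type*) [Category D] [Abelian D] : Prop :=
  ∀ S : ShortComplex D, S.ShortExact → Nonempty S.Splitting

/-!
A triple `(X, Y, η)` with `η` split mono is `(X', 0, 0) ⊞ E(Y)` with `X'` a complement of
the image of `η`, and both summands are projective: `(X', 0, 0)` because every object of a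
semisimple category is, and `E(Y)` because maps out of it are determined by their `B`-component,
which lifts along epimorphisms since `Y` is projective (the components of an epimorphism of
triples are epimorphisms, `F` being right exact). Conversely, every triple `Z` is a quotient of
the projective triple `(X ⊞ F(Y), Y, inr)`; if `Z` is projective this quotient map splits, and
`η` followed by the `A`-component of the splitting is the monomorphism `inr`.
-/

namespace IsSemisimpleCat

variable {D : Type*} [Category D] [Abelian D]

lemma exists_section (h : IsSemisimpleCat D) {M N : D} (g : M ⟶ N) [Epi g] :
    ∃ s : N ⟶ M, s ≫ g = 𝟙 N := by
  obtain ⟨σ⟩ := h (ShortComplex.kernelSequence g)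
    (.mk' (ShortComplex.kernelSequence_exact g) inferInstance ‹Epi g›)
  exact ⟨σ.s, σ.s_g⟩

lemma projective (h : IsSemisimpleCat D) (P : D) : Projective P where
  factors f e _ := by
    obtain ⟨s, hs⟩ := h.exists_section e
    exact ⟨f ≫ s, by rw [Category.assoc, hs, Category.comp_id]⟩

lemma exists_iso_biprod_of_mono (h : IsSemisimpleCat D) {M N : D} (f : M ⟶ N) [Mono f] :
    ∃ (X' : D) (i : X' ⟶ N) (e : N ≅ X' ⊞ M), Mono i ∧ f ≫ e.hom = biprod.inr := by
  let S := ShortComplex.mk f (cokernel.π f) (cokernel.condition f)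
  obtain ⟨σ⟩ := h S
    (.mk' (S.exact_of_g_is_cokernel (cokernelIsCokernel f)) ‹_› inferInstance)
  refine ⟨cokernel f, σ.s, σ.isoBinaryBiproduct ≪≫ biprod.braiding _ _,
    (⟨_, σ.s_g⟩ : SplitMono σ.s).mono, ?_⟩
  have hfr : f ≫ σ.r = 𝟙 M := σ.f_r
  apply biprod.hom_ext <;> simp [S, hfr]

end IsSemisimpleCat

lemma CategoryTheory.Comma.epi_of_epi_left_of_epi_right {C D T : Type*} [Category C]
    [Category D] [Category T] {L : C ⥤ T} {R : D ⥤ T} {X Y : Comma L R} (f : X ⟶ Y)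
    [Epi f.left] [Epi f.right] : Epi f :=
  ⟨fun _ _ w => Comma.hom_ext _ _ ((cancel_epi f.left).1 (congrArg CommaMorphism.left w))
    ((cancel_epi f.right).1 (congrArg CommaMorphism.right w))⟩

section Triples

variable {C : Type*} [Category C] [Preadditive C] [HasBinaryBiproducts C]
variable {D : Type*} [Category D] (G : D ⥤ C)

/-- `(X', 0, 0) ⊞ E(Y)` in the notation of the statement. -/
noncomputable abbrev inrTriple (X' : C) (Y : D) : Comma G (𝟭 C) :=
  Comma.mk (L := G) (R := 𝟭 C) (left := Y) (right := X' ⊞ G.obj Y) (hom := biprod.inr)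

noncomputable def inrTripleπ (Z : Comma G (𝟭 C)) : inrTriple G Z.right Z.left ⟶ Z where
  left := 𝟙 _
  right := biprod.desc (𝟙 _) Z.hom
  w := by simp

instance (Z : Comma G (𝟭 C)) : Epi (inrTripleπ G Z) :=
  have : Epi (inrTripleπ G Z).left := inferInstanceAs (Epi (𝟙 _))
  have : Epi (inrTripleπ G Z).right := epi_of_epi_fac (biprod.inl_desc (𝟙 _) Z.hom)
  Comma.epi_of_epi_left_of_epi_right _

lemma mono_hom_of_projective (Z : Comma G (𝟭 C)) [Projective Z] : Mono Z.hom := by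
  obtain ⟨s, hs⟩ := Projective.factors (𝟙 Z) (inrTripleπ G Z)
  have hsl : s.left = 𝟙 _ := by simpa [inrTripleπ] using congrArg CommaMorphism.left hs
  have : Z.hom ≫ s.right = biprod.inr := by simpa [hsl] using s.w.symm
  exact mono_of_mono_fac this

end Triples

lemma exists_iso_inrTriple_of_mono {C : Type*} [Category C] [Abelian C] {D : Type*} [Category D]
    (G : D ⥤ C) (hC : IsSemisimpleCat C) (Z : Comma G (𝟭 C)) [Mono Z.hom] :
    ∃ (X' : C) (i : X' ⟶ Z.right), Mono i ∧ Nonempty (Z ≅ inrTriple G X' Z.left) := by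
  obtain ⟨X', i, e, hi, he⟩ := hC.exists_iso_biprod_of_mono Z.hom
  exact ⟨X', i, hi, ⟨Comma.isoMk (Iso.refl _) e (by simp [he])⟩⟩

lemma inrTriple_projective [PreservesFiniteColimits F] (hA : IsSemisimpleCat A)
    (hB : IsSemisimpleCat B) (X' : A) (Y : B) : Projective (inrTriple F X' Y) where
  factors {Q W} f e _ := by
    have : Epi e.left := (inferInstance : Epi ((Comma.fst F (𝟭 A)).map e))
    have : Epi e.right := (inferInstance : Epi ((Comma.snd F (𝟭 A)).map e))
    obtain ⟨l, hl⟩ := (hB.projective Y).factors f.left e.left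
    obtain ⟨r, hr⟩ := (hA.projective X').factors (biprod.inl ≫ f.right) e.right
    refine ⟨{ left := l, right := biprod.desc r (F.map l ≫ Q.hom), w := by simp },
      Comma.hom_ext _ _ hl (biprod.hom_ext' _ _ (by simpa using hr) ?_)⟩
    have he := e.w
    have hf := f.w
    dsimp at he hf ⊢
    calc biprod.inr ≫ biprod.desc r (F.map l ≫ Q.hom) ≫ e.right
      _ = F.map l ≫ Q.hom ≫ e.right := by simp
      _ = F.map (l ≫ e.left) ≫ W.hom := by rw [← he, F.map_comp_assoc]
      _ = biprod.inr ≫ f.right := by rw [hl, hf]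

theorem projective_iff_mono_in_triple_category
    (hA : IsSemisimpleCat A) (hB : IsSemisimpleCat B)
    [PreservesFiniteColimits F]
    (Z : Comma F (𝟭 A)) :
    (Projective Z ↔ Mono Z.hom) ∧
    (Projective Z → ∃ (X' : A) (i : X' ⟶ Z.right), Mono i ∧
      Nonempty (Z ≅ Comma.mk (L := F) (R := 𝟭 A)
        (left := Z.left) (right := X' ⊞ F.obj Z.left) (hom := biprod.inr))) := by
  have hmono : Projective Z → Mono Z.hom := fun _ => mono_hom_of_projective F Z
  have hsplit : Mono Z.hom → ∃ (X' : A) (i : X' ⟶ Z.right), Mono i ∧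
      Nonempty (Z ≅ inrTriple F X' Z.left) := fun _ => exists_iso_inrTriple_of_mono F hA Z
  refine ⟨⟨hmono, fun hZ => ?_⟩, fun hZ => hsplit (hmono hZ)⟩
  obtain ⟨X', -, -, ⟨e⟩⟩ := hsplit hZ
  exact Projective.of_iso e.symm (inrTriple_projective F hA hB X' Z.left)
end

section
/- With F̃ as above, every object Z = (X, Y, η) of F̃ admits a projective resolution 0 → F(Y) → X × E(Y) → Z → 0, where the first map is (η, ι) and the second is f − μ for the canonical morphisms; in particular F̃ has enough projectives and is hereditary. -/
/-!
Every object of a semi-simple abelian category is projective. An epimorphism of `ℱ̃` is an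
epimorphism in each component (`F` preserves pushouts), so lifts against it can be built
componentwise; this makes `(F(Y), 0, 0)` and `X × E(Y)` projective, the `X̃`-component of a lift
out of `E(Y)` being forced by its `𝒴`-component because the structure map of `E(Y)` is the
identity. A morphism into `X × E(Y)` killed by `f − μ` has zero `𝒴`-component, hence factors
through `F(Y)` via the second projection, so the sequence is exact. A short exact sequence whose
first two terms are projective shows that `Z` has projective dimension at most one.
-/

open CategoryTheory CategoryTheory.Limits CategoryTheory.Abelian ZeroObject

universe w v₁ v₂ u₁ u₂

variable {A : Type u₁} [Category.{v₁} A] [Abelian A]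
variable {B : Type u₂} [Category.{v₂} B] [Abelian B]
variable (F : B ⥤ A) [F.Additive]

/-- The object `F(Y)` of `ℱ̃ = Comma F (𝟭 A)`, i.e. the triple `(F(Y), 0, 0)`,
for `Z = (X, Y, η)`. -/
noncomputable def objFY (Z : Comma F (𝟭 A)) : Comma F (𝟭 A) :=
  Comma.mk (left := (0 : B)) (right := F.obj Z.left) (hom := 0)

/-- The object `X × E(Y)` of `ℱ̃`, i.e. the triple `(X ⊞ F(Y), Y, biprod.inr)`,
for `Z = (X, Y, η)`. -/
noncomputable def objP (Z : Comma F (𝟭 A)) : Comma F (𝟭 A) :=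
  Comma.mk (left := Z.left) (right := Z.right ⊞ F.obj Z.left) (hom := biprod.inr)

/-- The morphism `(η, ι) : F(Y) ⟶ X × E(Y)` in `ℱ̃`. -/
noncomputable def morα (Z : Comma F (𝟭 A)) : objFY F Z ⟶ objP F Z where
  left := 0
  right := biprod.lift Z.hom (𝟙 (F.obj Z.left))
  w := by
    first
      | (rw [Functor.map_zero, zero_comp]; simp [objFY, objP]; done)
      | (rw [Functor.map_zero, zero_comp]; simp [objFY, objP]; rfl)
      | (rw [Functor.map_zero, zero_comp]; exact zero_comp.symm)
      | (dsimp only; rw [Functor.map_zero, zero_comp]; simp [objFY, objP])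
      | (simp only [Functor.map_zero, zero_comp]; simp [objFY, objP])

/-- The morphism `f − μ : X × E(Y) ⟶ Z` in `ℱ̃`, where `f : X → Z` is the canonical
inclusion and `μ : E(Y) → Z` the canonical morphism. -/
noncomputable def morβ (Z : Comma F (𝟭 A)) : objP F Z ⟶ Z where
  left := -𝟙 Z.left
  right := biprod.desc (𝟙 Z.right) (-Z.hom)
  w := by simp [objP]

theorem IsSemisimpleCat.projective_s11 {D : Type*} [Category D] [Abelian D]
    (hD : IsSemisimpleCat D) (X : D) : Projective X where
  factors {E Y} f e _ := by
    obtain ⟨σ⟩ := hD _ { exact := ShortComplex.exact_kernel e }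
    exact ⟨f ≫ σ.s, by simp [σ.s_g]⟩

section Projective

variable {L : B ⥤ A} [PreservesColimitsOfShape WalkingSpan L]

theorem projective_mk_zero [L.PreservesZeroMorphisms] (X : A) [Projective X] :
    Projective (Comma.mk (L := L) (R := 𝟭 A) (left := 0) (right := X) (hom := 0)) where
  factors {E E'} f e _ := by
    have : Epi e.right := (Comma.snd L (𝟭 A)).map_epi e
    refine ⟨{ left := 0, right := Projective.factorThru f.right e.right, w := ?_ },
      Comma.hom_ext _ _ ((isZero_zero B).eq_of_src _ _) (by simp)⟩
    rw [L.map_zero, zero_comp]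
    exact zero_comp.symm

theorem projective_mk_biprod_inr (X : A) (Y : B) [Projective X] [Projective Y] :
    Projective (Comma.mk (L := L) (R := 𝟭 A) (left := Y) (right := X ⊞ L.obj Y)
      (hom := biprod.inr)) where
  factors {E E'} f e _ := by
    have : Epi e.left := (Comma.fst L (𝟭 A)).map_epi e
    have : Epi e.right := (Comma.snd L (𝟭 A)).map_epi e
    let l : Y ⟶ E.left := Projective.factorThru f.left e.left
    have hl : l ≫ e.left = f.left := Projective.factorThru_comp _ _
    have hf : L.map f.left ≫ E'.hom = biprod.inr ≫ f.right := by simp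
    have he : E.hom ≫ e.right = L.map e.left ≫ E'.hom := by simp
    refine ⟨{ left := l
              right := biprod.desc (Projective.factorThru (biprod.inl ≫ f.right) e.right)
                (L.map l ≫ E.hom) }, Comma.hom_ext _ _ hl (biprod.hom_ext' _ _ ?_ ?_)⟩
    · simp
    · simp only [Comma.comp_right, biprod.inr_desc_assoc, Category.assoc, he]
      rw [← L.map_comp_assoc, hl, hf]

end Projective

/- Here and in `isKernelMorα`, morphisms into `objFY F Z` or `objP F Z` are typed with the
literal triple, so that `simp` sees the components of their target. -/
instance mono_morα (Z : Comma F (𝟭 A)) : Mono (morα F Z) where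
  right_cancellation {T} (u v : T ⟶ Comma.mk 0 (F.obj Z.left) 0) h := by
    have h : u.right ≫ biprod.lift Z.hom (𝟙 _) = v.right ≫ biprod.lift Z.hom (𝟙 _) :=
      congr(($h).right)
    exact Comma.hom_ext _ _ ((isZero_zero B).eq_of_tgt _ _)
      (by simpa using congr($h ≫ biprod.snd))

instance epi_morβ (Z : Comma F (𝟭 A)) : Epi (morβ F Z) where
  left_cancellation {T} u v h := by
    have hl : (-𝟙 Z.left) ≫ u.left = (-𝟙 Z.left) ≫ v.left := congr(($h).left)
    have hr : biprod.desc (𝟙 Z.right) (-Z.hom) ≫ u.right =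
        biprod.desc (𝟙 Z.right) (-Z.hom) ≫ v.right := congr(($h).right)
    exact Comma.hom_ext _ _ (by simpa using hl) (by simpa using congr(biprod.inl ≫ $hr))

section ShortExact

/- The given abelian structure on `Comma F (𝟭 A)` need not be the componentwise one, so the
componentwise preadditive structure is switched off here; zero morphisms are unique, hence still
componentwise. -/
variable [Abelian (Comma F (𝟭 A))]
attribute [-instance] CategoryTheory.instPreadditiveComma
attribute [-instance] CategoryTheory.CommaMorphism.instZeroHomComma

theorem Comma.hom_eq_zero_iff {C D T : Type*} [Category C] [Category D] [Category T]
    [Preadditive C] [Preadditive D] [Preadditive T] {L : C ⥤ T} {R : D ⥤ T}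
    [L.Additive] [R.Additive] [HasZeroMorphisms (Comma L R)] {W W' : Comma L R} (f : W ⟶ W') :
    f = 0 ↔ f.left = 0 ∧ f.right = 0 := by
  have h := Subsingleton.elim (α := HasZeroMorphisms (Comma L R)) inferInstance
    (@Preadditive.preadditiveHasZeroMorphisms _ _ (instPreadditiveComma L R))
  rw [show (0 : W ⟶ W') = _ from congrArg (fun z => (@HasZeroMorphisms.zero _ _ z W W').zero) h]
  exact ⟨fun hf => hf ▸ ⟨rfl, rfl⟩, fun ⟨hl, hr⟩ => CommaMorphism.ext hl hr⟩

theorem morα_comp_morβ (Z : Comma F (𝟭 A)) : morα F Z ≫ morβ F Z = 0 :=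
  (Comma.hom_eq_zero_iff _).2 ⟨zero_comp,
    (by simp : biprod.lift Z.hom (𝟙 _) ≫ biprod.desc (𝟙 Z.right) (-Z.hom) = 0)⟩

noncomputable def resolution (Z : Comma F (𝟭 A)) : ShortComplex (Comma F (𝟭 A)) :=
  ShortComplex.mk (morα F Z) (morβ F Z) (morα_comp_morβ F Z)

noncomputable def isKernelMorα (Z : Comma F (𝟭 A)) :
    IsLimit (KernelFork.ofι (morα F Z) (morα_comp_morβ F Z)) :=
  KernelFork.IsLimit.ofι' _ _
    fun {T} (t : T ⟶ Comma.mk Z.left (Z.right ⊞ F.obj Z.left) biprod.inr) ht => by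
    obtain ⟨hl, hr⟩ : t.left ≫ (-𝟙 Z.left) = 0 ∧
        t.right ≫ biprod.desc (𝟙 Z.right) (-Z.hom) = 0 :=
      (Comma.hom_eq_zero_iff _).1 ht
    have htl : t.left = 0 := by simpa using hl
    have htr : t.right ≫ biprod.fst = t.right ≫ biprod.snd ≫ Z.hom := by
      simpa [biprod.desc_eq, add_neg_eq_zero] using hr
    have htw : T.hom ≫ t.right = 0 := by simpa [htl] using t.w.symm
    have hsnd : T.hom ≫ t.right ≫ biprod.snd = 0 := by simp [reassoc_of% htw]
    have hlift : (t.right ≫ biprod.snd) ≫ biprod.lift Z.hom (𝟙 _) = t.right := by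
      ext <;> simp [htr]
    refine ⟨{ left := 0, right := t.right ≫ biprod.snd, w := ?_ }, ?_⟩
    · rw [F.map_zero, zero_comp]
      exact hsnd.symm
    · exact Comma.hom_ext _ _ (zero_comp.trans htl.symm) hlift

theorem shortExact_resolution (Z : Comma F (𝟭 A)) : (resolution F Z).ShortExact where
  exact := ShortComplex.exact_of_f_is_kernel _ (isKernelMorα F Z)
  mono_f := mono_morα F Z
  epi_g := epi_morβ F Z

end ShortExact

theorem triple_category_projective_resolution
    (hA : IsSemisimpleCat A) (hB : IsSemisimpleCat B)
    [PreservesFiniteColimits F]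
    [Abelian (Comma F (𝟭 A))] [HasExt.{w} (Comma F (𝟭 A))] :
    (∀ Z : Comma F (𝟭 A), ∃ S : ShortComplex (Comma F (𝟭 A)),
      S.ShortExact ∧ S.X₁ = objFY F Z ∧ S.X₂ = objP F Z ∧ S.X₃ = Z ∧
      HEq S.f (morα F Z) ∧ HEq S.g (morβ F Z) ∧
      Projective S.X₁ ∧ Projective S.X₂) ∧
    EnoughProjectives (Comma F (𝟭 A)) ∧
    (∀ (Z Z' : Comma F (𝟭 A)) (i : ℕ), 2 ≤ i → Subsingleton (Ext Z Z' i)) := by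
  have projective_objFY (Z : Comma F (𝟭 A)) : Projective (objFY F Z) :=
    have := hA.projective_s11 (F.obj Z.left)
    projective_mk_zero (F.obj Z.left)
  have projective_objP (Z : Comma F (𝟭 A)) : Projective (objP F Z) :=
    have := hA.projective_s11 Z.right
    have := hB.projective_s11 Z.left
    projective_mk_biprod_inr Z.right Z.left
  refine ⟨fun Z => ?_, ⟨fun Z => ⟨⟨objP F Z, morβ F Z⟩⟩⟩, fun Z Z' i hi => ?_⟩
  -- The short complexes of the statement carry the componentwise zero morphisms.
  · rw [Subsingleton.elim (α := HasZeroMorphisms (Comma F (𝟭 A)))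
      (@Preadditive.preadditiveHasZeroMorphisms _ _ (instPreadditiveComma F (𝟭 A)))
      Abelian.toPreadditive.preadditiveHasZeroMorphisms]
    exact ⟨resolution F Z, shortExact_resolution F Z, rfl, rfl, rfl, .rfl, .rfl,
      projective_objFY Z, projective_objP Z⟩
  · have := projective_objFY Z
    have := projective_objP Z
    have : HasProjectiveDimensionLT Z 2 :=
      (shortExact_resolution F Z).hasProjectiveDimensionLT_X₃ 1
        (inferInstanceAs (HasProjectiveDimensionLT (objFY F Z) 1))
        (hasProjectiveDimensionLT_of_ge (objP F Z) 1 2 (by norm_num))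
    exact HasProjectiveDimensionLT.subsingleton Z 2 i hi Z'
end

section
/- Let R be the triangular matrix ring of a ring S = R_X ⊕ R_Y with an R_X-R_Y-bimodule M (so R consists of matrices (y 0; m x)). Then the category of all left R-modules is equivalent to the category of triples (X, Y, f), where X is an R_X-module, Y is an R_Y-module, and f : M ⊗_{R_Y} Y → X is an R_X-module morphism, with morphisms pairs (u, v) making the obvious square commute. -/
open CategoryTheory

universe u

variable (RX RY : Type u) [Ring RX] [Ring RY]
variable (M : Type u) [AddCommGroup M] [Module RX M] [Module RYᵐᵒᵖ M]
variable [SMulCommClass RX RYᵐᵒᵖ M]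

/-- `M` as a left module over `S = R_X × R_Y`, acting through `R_X`. -/
noncomputable local instance moduleProdLeft : Module (RX × RY) M :=
  Module.compHom M (RingHom.fst RX RY)

/-- `M` as a right module over `S = R_X × R_Y`, acting through `R_Y`. -/
noncomputable local instance moduleProdRight : Module (RX × RY)ᵐᵒᵖ M :=
  Module.compHom M (RingHom.op (RingHom.snd RX RY))

local instance : SMulCommClass (RX × RY) (RX × RY)ᵐᵒᵖ M :=
  ⟨fun a b m => smul_comm a.1 (MulOpposite.op b.unop.2) m⟩

/-- The triangular matrix ring `R = (R_Y 0; M R_X)` of `S = R_X ⊕ R_Y` with the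
`R_X`-`R_Y`-bimodule `M`: as an additive group it is `(R_X × R_Y) × M`, with
multiplication `(s, m)(s', m') = (s s', s m' + m s')` where `S` acts on `M` on the left
through `R_X` and on the right through `R_Y`. -/
noncomputable abbrev TriangularRing : Type u := TrivSqZeroExt (RX × RY) M

/-- A triple `(X, Y, f)` where `X` is an `R_X`-module, `Y` an `R_Y`-module and
`f : M ⊗_{R_Y} Y → X` a morphism of `R_X`-modules; the tensor product over the
(possibly noncommutative) ring `R_Y` is encoded by its universal property: `f` is
given by a map `b : M → Y → X`, additive in each variable, `R_X`-linear in the first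
variable, and `R_Y`-balanced. -/
structure TripleObj : Type (u + 1) where
  X : ModuleCat.{u} RX
  Y : ModuleCat.{u} RY
  b : M →+ (↥Y →+ ↥X)
  smul_fst : ∀ (r : RX) (m : M) (y : Y), b (r • m) y = r • b m y
  balanced : ∀ (m : M) (s : RY) (y : Y), b (MulOpposite.op s • m) y = b m (s • y)

variable {RX RY M}

/-- A morphism of triples `(X, Y, f) ⟶ (X', Y', f')`: a pair `(u, v)` making the
obvious square commute. -/
@[ext] structure TripleHom (P Q : TripleObj RX RY M) where
  u : P.X ⟶ Q.X
  v : P.Y ⟶ Q.Y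
  compat : ∀ (m : M) (y : P.Y), u (P.b m y) = Q.b m (v y)

instance : Category (TripleObj RX RY M) where
  Hom := TripleHom
  id P := ⟨𝟙 P.X, 𝟙 P.Y, fun m y => rfl⟩
  comp f g := ⟨f.u ≫ g.u, f.v ≫ g.v, fun m y => by
    simp only [ConcreteCategory.comp_apply, f.compat, g.compat]⟩
  id_comp f := TripleHom.ext (by simp) (by simp)
  comp_id f := TripleHom.ext (by simp) (by simp)
  assoc f g h := TripleHom.ext (by simp) (by simp)


/-! A module over `R = S ⋉ M` amounts to an `S`-module together with a square-zero action of `M`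
compatible with both scalar actions (`TrivSqZeroExt.lift`). For a triple `(X, Y, f)` this puts the
action `(s, m) • (x, y) = (s₁ x + f (m ⊗ y), s₂ y)` on `X × Y`. Conversely, the orthogonal
idempotents `e_X = inl (1, 0)` and `e_Y = inl (0, 1)` of `R` split every `R`-module as
`N = e_X N ⊕ e_Y N`, an `R_X`-module and an `R_Y`-module, and `inr m` maps `e_Y N` to `e_X N`.
`R`-linear maps preserve this splitting, which makes the functor from triples fully faithful. -/

namespace TripleObj

variable (P : TripleObj RX RY M)

def diagAction : RX × RY →+* AddMonoid.End (P.X × P.Y) where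
  toFun s := (DistribSMul.toAddMonoidHom P.X s.1).prodMap (DistribSMul.toAddMonoidHom P.Y s.2)
  map_one' := by ext <;> exact one_smul _ _
  map_mul' s t := by ext <;> exact mul_smul _ _ _
  map_zero' := by ext <;> exact zero_smul _ _
  map_add' s t := by ext <;> exact add_smul _ _ _

def pairingAction : M →ₗ[ℤ] AddMonoid.End (P.X × P.Y) :=
  AddMonoidHom.toIntLinearMap
    { toFun m := (AddMonoidHom.inl P.X P.Y).comp ((P.b m).comp (AddMonoidHom.snd P.X P.Y))
      map_zero' := AddMonoidHom.ext fun xy => Prod.ext (DFunLike.congr_fun (map_zero P.b) xy.2) rfl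
      map_add' m m' := AddMonoidHom.ext fun xy =>
        Prod.ext (DFunLike.congr_fun (map_add P.b m m') xy.2) (add_zero 0).symm }

noncomputable def action : TriangularRing RX RY M →ₐ[ℤ] AddMonoid.End (P.X × P.Y) :=
  TrivSqZeroExt.lift P.diagAction.toIntAlgHom P.pairingAction
    (fun m _ => AddMonoidHom.ext fun _ => Prod.ext (map_zero (P.b m)) rfl)
    (fun s m => AddMonoidHom.ext fun xy => Prod.ext (P.smul_fst s.1 m xy.2) (smul_zero s.2).symm)
    (fun s m => AddMonoidHom.ext fun xy => Prod.ext (P.balanced m s.2 xy.2) rfl)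

noncomputable instance : Module (TriangularRing RX RY M) (P.X × P.Y) :=
  Module.compHom _ P.action.toRingHom

lemma smul_def (r : TriangularRing RX RY M) (xy : P.X × P.Y) :
    r • xy = (r.fst.1 • xy.1 + P.b r.snd xy.2, r.fst.2 • xy.2) :=
  Prod.ext rfl (add_zero _)

end TripleObj

namespace NonUnitalRingHom

variable {A B R : Type*} [Semiring A] [Semiring B] [Ring R]
variable (φ : A →ₙ+* R) (N : Type*) [AddCommGroup N] [Module R N]

def corner : AddSubgroup N :=
  (DistribSMul.toAddMonoidHom N (φ 1)).eqLocus (AddMonoidHom.id N)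

variable {φ N}

lemma mem_corner {n : N} : n ∈ φ.corner N ↔ φ 1 • n = n := Iff.rfl

lemma smul_mem_corner (a : A) (n : N) : φ a • n ∈ φ.corner N := by
  rw [mem_corner, smul_smul, ← map_mul, one_mul]

lemma smul_eq_mul_smul_of_mem_corner (r : R) {n : N} (hn : n ∈ φ.corner N) :
    r • n = (r * φ 1) • n := by
  rw [mul_smul, mem_corner.mp hn]

instance : Module A (φ.corner N) where
  smul a n := ⟨φ a • (n : N), smul_mem_corner (φ := φ) a (n : N)⟩
  one_smul n := Subtype.ext n.2
  mul_smul a a' n :=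
    Subtype.ext <| (congrArg (· • (n : N)) (map_mul φ a a')).trans (mul_smul _ _ _)
  smul_zero _ := Subtype.ext (smul_zero _)
  smul_add _ n n' := Subtype.ext (smul_add _ (n : N) n')
  add_smul a a' n :=
    Subtype.ext <| (congrArg (· • (n : N)) (map_add φ a a')).trans (add_smul _ _ _)
  zero_smul n :=
    Subtype.ext <| (congrArg (· • (n : N)) (map_zero φ)).trans (zero_smul _ _)

@[simp] lemma coe_smul_corner (a : A) (n : φ.corner N) :
    ((a • n : φ.corner N) : N) = φ a • n :=
  rfl

def cornerProdEquiv (ψ : B →ₙ+* R) (hsum : φ 1 + ψ 1 = 1) :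
    φ.corner N × ψ.corner N ≃+ N where
  toFun xy := xy.1 + xy.2
  invFun n := (⟨φ 1 • n, smul_mem_corner 1 n⟩, ⟨ψ 1 • n, smul_mem_corner 1 n⟩)
  left_inv := by
    -- idempotents summing to `1` are orthogonal
    have hφψ : φ 1 * ψ 1 = 0 := by
      simpa [mul_add, ← map_mul] using congrArg (φ 1 * ·) hsum
    have hψφ : ψ 1 * φ 1 = 0 := by
      simpa [mul_add, ← map_mul] using congrArg (ψ 1 * ·) hsum
    rintro ⟨⟨x, hx⟩, ⟨y, hy⟩⟩
    ext
    · change φ 1 • (x + y) = x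
      rw [smul_add, mem_corner.mp hx, smul_eq_mul_smul_of_mem_corner _ hy, hφψ, zero_smul,
        add_zero]
    · change ψ 1 • (x + y) = y
      rw [smul_add, mem_corner.mp hy, smul_eq_mul_smul_of_mem_corner _ hx, hψφ, zero_smul,
        zero_add]
  right_inv n := by simp [← add_smul, hsum]
  map_add' xy xy' := add_add_add_comm _ _ _ _

end NonUnitalRingHom

namespace TriangularRing

open TrivSqZeroExt

omit [SMulCommClass RX RYᵐᵒᵖ M]

omit [Module RYᵐᵒᵖ M] in
@[simp] lemma prod_smul_eq (s : RX × RY) (m : M) : s • m = s.1 • m := rfl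

omit [Module RX M] in
@[simp] lemma prod_op_smul_eq (s : RX × RY) (m : M) :
    MulOpposite.op s • m = MulOpposite.op s.2 • m := rfl

noncomputable def inlX : RX →ₙ+* TriangularRing RX RY M :=
  (inlHom (RX × RY) M).toNonUnitalRingHom.comp ((NonUnitalRingHom.id RX).prod 0)

noncomputable def inlY : RY →ₙ+* TriangularRing RX RY M :=
  (inlHom (RX × RY) M).toNonUnitalRingHom.comp ((0 : RY →ₙ+* RX).prod (NonUnitalRingHom.id RY))

@[simp] lemma inlX_apply (r : RX) : (inlX r : TriangularRing RX RY M) = inl (r, 0) := rfl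

@[simp] lemma inlY_apply (s : RY) : (inlY s : TriangularRing RX RY M) = inl (0, s) := rfl

lemma inlX_one_add_inlY_one : (inlX 1 + inlY 1 : TriangularRing RX RY M) = 1 := by
  ext <;> simp

lemma inlX_mul_inr (r : RX) (m : M) :
    (inlX r * inr m : TriangularRing RX RY M) = inr (r • m) := by
  ext <;> simp

lemma inr_mul_inlY (m : M) (s : RY) :
    (inr m * inlY s : TriangularRing RX RY M) = inr (MulOpposite.op s • m) := by
  ext <;> simp

lemma mul_inlX_one (r : TriangularRing RX RY M) : r * inlX 1 = inlX r.fst.1 := by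
  ext <;> simp

lemma mul_inlY_one (r : TriangularRing RX RY M) : r * inlY 1 = inlY r.fst.2 + inr r.snd := by
  ext <;> simp

end TriangularRing

open TriangularRing TrivSqZeroExt

namespace TripleObj

variable (P : TripleObj RX RY M)

lemma inlX_smul (r : RX) (xy : P.X × P.Y) :
    (inlX r : TriangularRing RX RY M) • xy = (r • xy.1, 0) := by
  simp [smul_def]

lemma inlY_smul (s : RY) (xy : P.X × P.Y) :
    (inlY s : TriangularRing RX RY M) • xy = (0, s • xy.2) := by
  simp [smul_def]

lemma inr_smul (m : M) (xy : P.X × P.Y) :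
    (inr m : TriangularRing RX RY M) • xy = (P.b m xy.2, 0) := by
  simp [smul_def]

noncomputable def toModuleCat : TripleObj RX RY M ⥤ ModuleCat.{u} (TriangularRing RX RY M) where
  obj P := ModuleCat.of _ (P.X × P.Y)
  map f := ModuleCat.ofHom
    { toFun := Prod.map f.u f.v
      map_add' _ _ := Prod.ext (map_add _ _ _) (map_add _ _ _)
      map_smul' r xy := by simp [smul_def, f.compat] }

end TripleObj

namespace TripleHom

variable {P Q : TripleObj RX RY M} (g : P.X × P.Y →ₗ[TriangularRing RX RY M] Q.X × Q.Y)

lemma snd_map_inl (x : P.X) : (g (x, 0)).2 = 0 := by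
  have h := g.map_smul (inlX 1) (x, 0)
  rw [P.inlX_smul, Q.inlX_smul, one_smul, one_smul] at h
  exact congrArg Prod.snd h

lemma fst_map_inr (y : P.Y) : (g (0, y)).1 = 0 := by
  have h := g.map_smul (inlY 1) (0, y)
  rw [P.inlY_smul, Q.inlY_smul, one_smul, one_smul] at h
  exact congrArg Prod.fst h

noncomputable def ofLinearMap : P ⟶ Q where
  u := ModuleCat.ofHom
    { toFun x := (g (x, 0)).1
      map_add' x x' := by rw [← Prod.fst_add, ← map_add, Prod.mk_add_mk, add_zero]
      map_smul' r x := by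
        have h := g.map_smul (inlX r) (x, 0)
        rw [P.inlX_smul, Q.inlX_smul] at h
        exact congrArg Prod.fst h }
  v := ModuleCat.ofHom
    { toFun y := (g (0, y)).2
      map_add' y y' := by rw [← Prod.snd_add, ← map_add, Prod.mk_add_mk, add_zero]
      map_smul' s y := by
        have h := g.map_smul (inlY s) (0, y)
        rw [P.inlY_smul, Q.inlY_smul] at h
        exact congrArg Prod.snd h }
  compat m y := by
    have h := g.map_smul (inr m) (0, y)
    rw [P.inr_smul, Q.inr_smul] at h
    exact congrArg Prod.fst h

lemma toModuleCat_map_ofLinearMap :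
    TripleObj.toModuleCat.map (ofLinearMap g) = ModuleCat.ofHom g := by
  ext ⟨x, y⟩
  change ((g (x, 0)).1, (g (0, y)).2) = g (x, y)
  have hxy : g (x, y) = g (x, 0) + g (0, y) := by
    rw [← map_add, Prod.mk_add_mk, add_zero, zero_add]
  rw [hxy]
  ext <;> simp [snd_map_inl, fst_map_inr]

end TripleHom

noncomputable def TripleObj.toModuleCatFullyFaithful :
    (TripleObj.toModuleCat (RX := RX) (RY := RY) (M := M)).FullyFaithful where
  preimage g := TripleHom.ofLinearMap g.hom
  map_preimage g := TripleHom.toModuleCat_map_ofLinearMap g.hom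
  preimage_map _ := rfl

namespace ModuleCat

variable (N : ModuleCat.{u} (TriangularRing RX RY M))

noncomputable abbrev xPart : AddSubgroup N := (inlX : RX →ₙ+* TriangularRing RX RY M).corner N

noncomputable abbrev yPart : AddSubgroup N := (inlY : RY →ₙ+* TriangularRing RX RY M).corner N

lemma inr_smul_mem_xPart (m : M) (n : N) : (inr m : TriangularRing RX RY M) • n ∈ xPart N := by
  rw [NonUnitalRingHom.mem_corner, smul_smul, inlX_mul_inr, one_smul]

noncomputable def partPairing : M →+ (yPart N →+ xPart N) :=
  AddMonoidHom.mk'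
    (fun m => AddMonoidHom.mk' (fun y => ⟨inr m • (y : N), inr_smul_mem_xPart N m y⟩)
      (fun y y' => Subtype.ext (smul_add _ (y : N) y')))
    (fun m m' => AddMonoidHom.ext fun y => Subtype.ext (by simp [add_smul]))

@[simp] lemma coe_partPairing (m : M) (y : yPart N) :
    (partPairing N m y : N) = (inr m : TriangularRing RX RY M) • (y : N) := rfl

noncomputable def toTriple : TripleObj RX RY M where
  X := ModuleCat.of RX (xPart N)
  Y := ModuleCat.of RY (yPart N)
  b := partPairing N
  smul_fst r m y := Subtype.ext <| by
    simp only [coe_partPairing, NonUnitalRingHom.coe_smul_corner, smul_smul, inlX_mul_inr]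
  balanced m s y := Subtype.ext <| by
    simp only [coe_partPairing, NonUnitalRingHom.coe_smul_corner, smul_smul, inr_mul_inlY]

noncomputable def toModuleCatObjToTripleIso : TripleObj.toModuleCat.obj (toTriple N) ≅ N :=
  LinearEquiv.toModuleIso
    { NonUnitalRingHom.cornerProdEquiv (inlY : RY →ₙ+* TriangularRing RX RY M)
        inlX_one_add_inlY_one with
      map_smul' r := by
        rintro ⟨⟨x, hx⟩, ⟨y, hy⟩⟩
        -- the `+ 0` is the `Y`-component of `inr r.snd • (x, y)`, see `TripleObj.smul_def`
        change ((inlX r.fst.1 : TriangularRing RX RY M) • x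
            + (inr r.snd : TriangularRing RX RY M) • y)
          + ((inlY r.fst.2 : TriangularRing RX RY M) • y + 0) = r • (x + y)
        rw [add_zero, smul_add, NonUnitalRingHom.smul_eq_mul_smul_of_mem_corner r hx,
          NonUnitalRingHom.smul_eq_mul_smul_of_mem_corner r hy, mul_inlX_one, mul_inlY_one,
          add_smul]
        abel }

end ModuleCat

instance : (TripleObj.toModuleCat (RX := RX) (RY := RY) (M := M)).IsEquivalence where
  faithful := TripleObj.toModuleCatFullyFaithful.faithful
  full := TripleObj.toModuleCatFullyFaithful.full
  essSurj := ⟨fun N => ⟨N.toTriple, ⟨N.toModuleCatObjToTripleIso⟩⟩⟩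

/-- The category of all left modules over the triangular matrix ring
`R = (R_Y 0; M R_X)` is equivalent to the category of triples `(X, Y, f)` with `X` an
`R_X`-module, `Y` an `R_Y`-module, and `f : M ⊗_{R_Y} Y → X` a morphism of
`R_X`-modules. -/
theorem triangular_matrix_ring_modules_equiv_triples :
    Nonempty (ModuleCat.{u} (TriangularRing RX RY M) ≌ TripleObj RX RY M) :=
  ⟨TripleObj.toModuleCat.asEquivalence.symm⟩
end
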